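/- arXiv:2405.01774 — 6 statements merged into one kernel-verified Lean document; each statement's English description precedes it below -/
import Mathlib

section
/- The function φ(p) = ⌊1/p⌋·p² + (1 - ⌊1/p⌋·p)² is continuous on (0,1] and strictly increasing, with range (0,1]; hence for each Δ ∈ (0, 1/4] there is a unique p ∈ (0,1] with φ(p) = 4Δ. -/
/-!
On `(1/(n+1), 1/n]` we have `⌊1/p⌋ = n`, and there `φ` is the quadratic
`n p² + (1 - n p)²`, which is increasing for `p ≥ 1/(n+1)` and fixes both endpoints. So `φ`
maps each such interval increasingly into itself, and these intervals are ordered, giving strict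
monotonicity. For continuity across the jumps of the floor, write `x = 1/p`; then
`1 - ⌊x⌋ p = p·fract x` and `φ(p) = p - p²·fract x·(1 - fract x)`, which is continuous because
`t (1 - t)` vanishes at `t = 0` and `t = 1`. This formula also gives `φ(p) ≤ p`, and
surjectivity onto `(0,1]` follows from the intermediate value theorem on `[y, 1]`.
-/

/-- The function `φ(p) = ⌊1/p⌋·p² + (1 - ⌊1/p⌋·p)²`. -/
noncomputable def phiUnif (p : ℝ) : ℝ :=
  (⌊1 / p⌋₊ : ℝ) * p ^ 2 + (1 - (⌊1 / p⌋₊ : ℝ) * p) ^ 2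

open Set Int

noncomputable def phiBranch (n : ℕ) (p : ℝ) : ℝ := n * p ^ 2 + (1 - n * p) ^ 2

lemma phiUnif_eq_phiBranch (p : ℝ) : phiUnif p = phiBranch ⌊1 / p⌋₊ p := rfl

lemma phiBranch_sub_phiBranch (n : ℕ) (s t : ℝ) :
    phiBranch n t - phiBranch n s = n * (t - s) * ((n + 1) * (t + s) - 2) := by
  unfold phiBranch; ring

lemma phiBranch_strictMonoOn {n : ℕ} (hn : n ≠ 0) :
    StrictMonoOn (phiBranch n) (Ici (1 / (n + 1))) := by
  intro s hs t ht hst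
  have hs' : 1 ≤ (n + 1) * s := by
    rwa [mem_Ici, div_le_iff₀' (by positivity)] at hs
  rw [← sub_pos, phiBranch_sub_phiBranch]
  have hfactor : 0 < (n + 1) * (t + s) - 2 := by nlinarith
  have hn' : (0 : ℝ) < n := by positivity
  exact mul_pos (mul_pos hn' (sub_pos.2 hst)) hfactor

lemma phiBranch_one_div_succ (n : ℕ) : phiBranch n (1 / (n + 1)) = 1 / (n + 1) := by
  unfold phiBranch; field_simp; ring

lemma phiBranch_one_div {n : ℕ} (hn : n ≠ 0) : phiBranch n (1 / n) = 1 / n := by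
  unfold phiBranch; field_simp; ring

lemma floor_one_div_ne_zero_and_mem_Ioc {p : ℝ} (hp : p ∈ Ioc 0 1) :
    ⌊1 / p⌋₊ ≠ 0 ∧ p ∈ Ioc (1 / ((⌊1 / p⌋₊ : ℝ) + 1)) (1 / ⌊1 / p⌋₊) := by
  obtain ⟨hp0, hp1⟩ := hp
  have hn : ⌊1 / p⌋₊ ≠ 0 := (Nat.floor_pos.2 (one_le_one_div hp0 hp1)).ne'
  refine ⟨hn, ?_, ?_⟩
  · rw [div_lt_iff₀ (by positivity), ← div_lt_iff₀' hp0]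
    exact Nat.lt_floor_add_one _
  · rw [le_div_iff₀ (by positivity), ← le_div_iff₀' hp0]
    exact Nat.floor_le (by positivity)

lemma phiUnif_mem_Ioc {p : ℝ} (hp : p ∈ Ioc 0 1) :
    phiUnif p ∈ Ioc (1 / ((⌊1 / p⌋₊ : ℝ) + 1)) (1 / ⌊1 / p⌋₊) := by
  obtain ⟨hn, hlo, hhi⟩ := floor_one_div_ne_zero_and_mem_Ioc hp
  have hmono := phiBranch_strictMonoOn hn
  rw [phiUnif_eq_phiBranch]
  constructor
  · calc 1 / (⌊1 / p⌋₊ + 1 : ℝ) = phiBranch ⌊1 / p⌋₊ (1 / (⌊1 / p⌋₊ + 1)) :=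
          (phiBranch_one_div_succ _).symm
      _ < phiBranch ⌊1 / p⌋₊ p := hmono self_mem_Ici (mem_Ici.2 hlo.le) hlo
  · calc phiBranch ⌊1 / p⌋₊ p ≤ phiBranch ⌊1 / p⌋₊ (1 / ⌊1 / p⌋₊) :=
          hmono.monotoneOn (mem_Ici.2 hlo.le) (mem_Ici.2 (hlo.trans_le hhi).le) hhi
      _ = 1 / ⌊1 / p⌋₊ := phiBranch_one_div hn

theorem phiUnif_strictMonoOn : StrictMonoOn phiUnif (Ioc 0 1) := by
  intro p hp q hq hpq
  have hfloor : ⌊1 / q⌋₊ ≤ ⌊1 / p⌋₊ := Nat.floor_le_floor (one_div_le_one_div_of_le hp.1 hpq.le)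
  rcases hfloor.eq_or_lt with heq | hlt
  · obtain ⟨hn, hlo, -⟩ := floor_one_div_ne_zero_and_mem_Ioc hp
    rw [phiUnif_eq_phiBranch, phiUnif_eq_phiBranch, heq]
    exact phiBranch_strictMonoOn hn (mem_Ici.2 hlo.le) (mem_Ici.2 (hlo.trans hpq).le) hpq
  · calc phiUnif p ≤ 1 / ⌊1 / p⌋₊ := (phiUnif_mem_Ioc hp).2
      _ ≤ 1 / (⌊1 / q⌋₊ + 1) := one_div_le_one_div_of_le (by positivity) (by exact_mod_cast hlt)
      _ < phiUnif q := (phiUnif_mem_Ioc hq).1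

lemma phiUnif_eq_sub_fract {p : ℝ} (hp : 0 < p) :
    phiUnif p = p - p ^ 2 * (fract (1 / p) * (1 - fract (1 / p))) := by
  have hfloor : (⌊1 / p⌋₊ : ℝ) = ⌊1 / p⌋ := by
    exact_mod_cast Int.natCast_floor_eq_floor (by positivity : (0 : ℝ) ≤ 1 / p)
  rw [phiUnif, hfloor, fract]
  field_simp
  ring

theorem phiUnif_continuousOn : ContinuousOn phiUnif (Ioi 0) := by
  have hfract : Continuous fun x : ℝ ↦ fract x * (1 - fract x) :=
    ContinuousOn.comp_fract'' (f := fun t : ℝ ↦ t * (1 - t)) (by fun_prop) (by norm_num)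
  refine ContinuousOn.congr ?_ fun p hp ↦ phiUnif_eq_sub_fract hp
  exact continuousOn_id.sub ((continuousOn_id.pow 2).mul
    (hfract.comp_continuousOn (continuousOn_const.div continuousOn_id fun _ hp ↦ hp.ne')))

lemma phiUnif_le_self {p : ℝ} (hp : 0 < p) : phiUnif p ≤ p := by
  rw [phiUnif_eq_sub_fract hp, sub_le_self_iff]
  have hfract_nonneg := fract_nonneg (1 / p)
  have hfract_lt_one := fract_lt_one (1 / p)
  positivity

lemma phiUnif_mapsTo : MapsTo phiUnif (Ioc 0 1) (Ioc 0 1) := fun p hp ↦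
  ⟨lt_trans (by positivity) (phiUnif_mem_Ioc hp).1, (phiUnif_le_self hp.1).trans hp.2⟩

theorem phiUnif_image : phiUnif '' Ioc 0 1 = Ioc 0 1 := by
  refine (phiUnif_mapsTo.image_subset).antisymm fun y hy ↦ ?_
  have hphi_one : phiUnif 1 = 1 := by norm_num [phiUnif]
  have hivt := intermediate_value_Icc hy.2
    (phiUnif_continuousOn.mono fun _ hp ↦ hy.1.trans_le hp.1)
  obtain ⟨p, hp, rfl⟩ := hivt ⟨phiUnif_le_self hy.1, hphi_one.symm ▸ hy.2⟩
  exact ⟨p, ⟨hy.1.trans_le hp.1, hp.2⟩, rfl⟩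

/-- `φ` is continuous and strictly increasing on `(0,1]`, with range `(0,1]`; hence for each
`Δ ∈ (0,1/4]` there is a unique `p ∈ (0,1]` with `φ(p) = 4Δ`. -/
theorem stmt3 :
    ContinuousOn phiUnif (Set.Ioc 0 1) ∧
    StrictMonoOn phiUnif (Set.Ioc 0 1) ∧
    phiUnif '' Set.Ioc 0 1 = Set.Ioc 0 1 ∧
    ∀ Δ ∈ Set.Ioc (0 : ℝ) (1 / 4), ∃! p, p ∈ Set.Ioc (0 : ℝ) 1 ∧ phiUnif p = 4 * Δ := by
  refine ⟨phiUnif_continuousOn.mono Ioc_subset_Ioi_self, phiUnif_strictMonoOn, phiUnif_image,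
    fun Δ hΔ ↦ ?_⟩
  have h4Δ : 4 * Δ ∈ phiUnif '' Ioc 0 1 := by
    rw [phiUnif_image]; constructor <;> linarith [hΔ.1, hΔ.2]
  obtain ⟨p, hp, hpΔ⟩ := h4Δ
  exact ⟨p, ⟨hp, hpΔ⟩, fun q ⟨hq, hqΔ⟩ ↦ phiUnif_strictMonoOn.injOn hq hp (hqΔ.trans hpΔ.symm)⟩
end

section
/- Let X be uniform on S = [0,a] ∪ [b,c] with 0 ≤ a ≤ b ≤ c, and let X̃ be uniform on [0, a + (c-b)]. For any measurable encoder f on S with countable range, define f̃ on [0, a+(c-b)] by f̃(x) = f(x) for x ∈ [0,a] and f̃(x) = f(x + (b-a)) for x ∈ (a, a+(c-b)]. Then f̃(X̃) has the same distribution (hence the same entropy) as f(X), and the minimal expected L1 distortion of each quantization cell of f̃ (using its median as reconstruction) is at most that of the corresponding cell of f. -/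
/-!
Let `d = b - a`. The collapse map `ψ y = max (min y a) (y - d)` is the identity on `[0,a]`, the
translation by `-d` on `[b,c]`, and it carries the uniform measure on `[0,a] ∪ [b,c]` onto the
uniform measure on `[0, a + (c - b)]`. Off the null set `{b}` we have `f̃ ∘ ψ = f`, so each cell
of `f̃` is the image of the corresponding cell of `f`; this gives equality of the cell masses.
Since `ψ` is `1`-Lipschitz, moving a reconstruction point `t` of a cell of `f` to `ψ t` can
only decrease the `L1` distortion of the transported cell.
-/

open MeasureTheory Set Filter

section Transfer

variable {α β ι : Type*} {ψ : α → β} {S : Set α} {g : β → ι} {h : α → ι}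

theorem preimage_sep_eq_of_comp_eqOn (hgh : EqOn (g ∘ ψ) h S) (i : ι) :
    ψ ⁻¹' (g ⁻¹' {i}) ∩ S = {y ∈ S | h y = i} := by
  ext y
  simp only [mem_inter_iff, mem_preimage, mem_singleton_iff, mem_ofPred_eq]
  exact ⟨fun ⟨hy, hS⟩ => ⟨hS, hgh hS ▸ hy⟩, fun ⟨hS, hy⟩ => ⟨(hgh hS).trans hy, hS⟩⟩

variable [MeasurableSpace α] [MeasurableSpace β] [MeasurableSpace ι] [MeasurableSingletonClass ι]
  {μ : Measure α} {ν : Measure β} {T : Set β}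

theorem measure_sep_eq_of_map_restrict (hψ : Measurable ψ)
    (hmap : (μ.restrict S).map ψ = ν.restrict T) (hg : Measurable g)
    (hgh : EqOn (g ∘ ψ) h S) (i : ι) :
    ν {x ∈ T | g x = i} = μ {y ∈ S | h y = i} := by
  have hE : MeasurableSet (g ⁻¹' {i}) := hg (measurableSet_singleton i)
  calc ν {x ∈ T | g x = i} = ν.restrict T (g ⁻¹' {i}) := by
        rw [Measure.restrict_apply hE, inter_comm]; rfl
    _ = μ.restrict S (ψ ⁻¹' (g ⁻¹' {i})) := by rw [← hmap, Measure.map_apply hψ hE]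
    _ = μ {y ∈ S | h y = i} := by
        rw [Measure.restrict_apply (hψ hE), preimage_sep_eq_of_comp_eqOn hgh]

theorem setIntegral_sep_eq_of_map_restrict (hψ : Measurable ψ)
    (hmap : (μ.restrict S).map ψ = ν.restrict T) (hg : Measurable g)
    (hgh : EqOn (g ∘ ψ) h S) (i : ι) {F : β → ℝ}
    (hF : AEStronglyMeasurable F (ν.restrict T)) :
    ∫ x in {x ∈ T | g x = i}, F x ∂ν = ∫ y in {y ∈ S | h y = i}, F (ψ y) ∂μ := by
  have hE : MeasurableSet (g ⁻¹' {i}) := hg (measurableSet_singleton i)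
  calc ∫ x in {x ∈ T | g x = i}, F x ∂ν = ∫ x in g ⁻¹' {i}, F x ∂(ν.restrict T) := by
        rw [Measure.restrict_restrict hE, inter_comm]; rfl
    _ = ∫ y in ψ ⁻¹' (g ⁻¹' {i}), F (ψ y) ∂(μ.restrict S) := by
        rw [← hmap] at hF ⊢
        exact setIntegral_map hE hF hψ.aemeasurable
    _ = ∫ y in {y ∈ S | h y = i}, F (ψ y) ∂μ := by
        rw [Measure.restrict_restrict (hψ hE), preimage_sep_eq_of_comp_eqOn hgh]

end Transfer

theorem setIntegral_abs_sub_comp_le {ψ : ℝ → ℝ} (hψ : LipschitzWith 1 ψ) {C : Set ℝ}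
    (hC : Bornology.IsBounded C) (t : ℝ) :
    ∫ y in C, |ψ y - ψ t| ≤ ∫ y in C, |y - t| := by
  have hint : IntegrableOn (fun y => |y - t|) C :=
    ((continuous_id.sub continuous_const).abs.continuousOn.integrableOn_compact
      hC.isCompact_closure).mono_set subset_closure
  refine integral_mono_of_nonneg (.of_forall fun _ => abs_nonneg _) hint (.of_forall fun y => ?_)
  simpa [Real.dist_eq] using hψ.dist_le_mul y t

def collapse (a b : ℝ) (y : ℝ) : ℝ := max (min y a) (y - (b - a))

section collapse

variable {a b : ℝ}

theorem lipschitzWith_collapse : LipschitzWith 1 (collapse a b) := by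
  have h := (LipschitzWith.id.min_const a).max (IsometryEquiv.subRight (b - a)).isometry.lipschitz
  rwa [max_self] at h

theorem collapse_of_le (hab : a ≤ b) {y : ℝ} (hy : y ≤ a) : collapse a b y = y := by
  rw [collapse, min_eq_left hy, max_eq_left (by linarith)]

theorem collapse_of_ge (hab : a ≤ b) {y : ℝ} (hy : b ≤ y) : collapse a b y = y - (b - a) := by
  rw [collapse, min_eq_right (by linarith), max_eq_right (by linarith)]

theorem map_collapse_restrict_Icc_union_Ioc {c : ℝ} (h0a : 0 ≤ a) (hab : a ≤ b) (hbc : b ≤ c) :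
    (volume.restrict (Icc 0 a ∪ Ioc b c)).map (collapse a b) =
      volume.restrict (Icc 0 (a + (c - b))) := by
  have hψ : Measurable (collapse a b) := lipschitzWith_collapse.continuous.measurable
  have hleft : (volume.restrict (Icc 0 a)).map (collapse a b) = volume.restrict (Icc 0 a) := by
    rw [Measure.map_congr (g := id), Measure.map_id]
    filter_upwards [ae_restrict_mem measurableSet_Icc] with y hy using collapse_of_le hab hy.2
  have hright : (volume.restrict (Ioc b c)).map (collapse a b) =
      volume.restrict (Ioc a (a + (c - b))) := by
    have htr : (fun y => y - (b - a)) ⁻¹' Ioc a (a + (c - b)) = Ioc b c := by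
      rw [preimage_sub_const_Ioc]; congr 1 <;> ring
    rw [Measure.map_congr (g := fun y => y - (b - a)), ← htr]
    · exact ((measurePreserving_sub_right volume (b - a)).restrict_preimage
        measurableSet_Ioc).map_eq
    filter_upwards [ae_restrict_mem measurableSet_Ioc] with y hy using collapse_of_ge hab hy.1.le
  have hdisj : Disjoint (Icc 0 a) (Ioc a (a + (c - b))) :=
    disjoint_left.mpr fun _ hy hy' => (not_lt.mpr hy.2) hy'.1
  have hdisj' : Disjoint (Icc 0 a) (Ioc b c) :=
    disjoint_left.mpr fun _ hy hy' => (not_lt.mpr (hy.2.trans hab)) hy'.1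
  rw [Measure.restrict_union hdisj' measurableSet_Ioc, Measure.map_add _ _ hψ, hleft, hright,
    ← Measure.restrict_union hdisj measurableSet_Ioc,
    Icc_union_Ioc_eq_Icc h0a (by linarith)]

end collapse

theorem stmt8_general (a b c : ℝ) (h0a : 0 ≤ a) (hab : a ≤ b) (hbc : b ≤ c)
    (f : ℝ → ℕ) (hf : Measurable f) :
    (∀ i : ℕ,
      volume {x ∈ Set.Icc 0 a ∪ Set.Icc b c | f x = i} =
        volume {x ∈ Set.Icc 0 (a + (c - b)) |
          (if x ≤ a then f x else f (x + (b - a))) = i}) ∧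
    (∀ i : ℕ,
      (⨅ t : ℝ, ∫ x in {x ∈ Set.Icc 0 (a + (c - b)) |
          (if x ≤ a then f x else f (x + (b - a))) = i}, |x - t|) ≤
        ⨅ t : ℝ, ∫ x in {x ∈ Set.Icc 0 a ∪ Set.Icc b c | f x = i}, |x - t|) := by
  set f' : ℝ → ℕ := fun x => if x ≤ a then f x else f (x + (b - a))
  have hf' : Measurable f' := hf.ite measurableSet_Iic (hf.comp (measurable_add_const _))
  have hmap := map_collapse_restrict_Icc_union_Ioc h0a hab hbc
  have hψ : Measurable (collapse a b) := lipschitzWith_collapse.continuous.measurable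
  have hcomp : EqOn (f' ∘ collapse a b) f (Icc 0 a ∪ Ioc b c) := by
    rintro y (hy | hy)
    · simp [f', collapse_of_le hab hy.2, hy.2]
    · simp [f', collapse_of_ge hab hy.1.le, show ¬y - (b - a) ≤ a by linarith [hy.1]]
  have hcell : ∀ i, {x ∈ Icc 0 a ∪ Icc b c | f x = i} =ᵐ[volume]
      {x ∈ Icc 0 a ∪ Ioc b c | f x = i} := fun i =>
    ((EventuallyEq.refl _ _).union Ioc_ae_eq_Icc.symm).inter (EventuallyEq.refl _ _)
  refine ⟨fun i => ?_, fun i => le_ciInf fun t => ?_⟩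
  · rw [measure_congr (hcell i), measure_sep_eq_of_map_restrict hψ hmap hf' hcomp]
  · have hbdd : BddBelow (range fun t => ∫ x in {x ∈ Icc 0 (a + (c - b)) | f' x = i}, |x - t|) :=
      ⟨0, forall_mem_range.mpr fun _ => integral_nonneg fun _ => abs_nonneg _⟩
    refine (ciInf_le hbdd (collapse a b t)).trans ?_
    rw [setIntegral_congr_set (hcell i), setIntegral_sep_eq_of_map_restrict hψ hmap hf' hcomp i
      (F := fun x => |x - collapse a b t|) (by fun_prop)]
    exact setIntegral_abs_sub_comp_le lipschitzWith_collapse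
      (((Metric.isBounded_Icc 0 a).union (Metric.isBounded_Ioc b c)).subset (sep_subset _ _)) t

/-- Collapsing the two-interval support `S = [0,a] ∪ [b,c]` to the single interval
`[0, a+(c-b)]`: the encoder `f̃(x) = f(x)` for `x ≤ a`, `f̃(x) = f(x+(b-a))` otherwise, induces
the same index distribution (hence the same entropy) on `Unif([0, a+(c-b)])` as `f` does on
`Unif(S)`, and the minimal expected `L1` distortion of each cell of `f̃` (with a median, i.e.
`L1`-optimal, reconstruction) is at most that of the corresponding cell of `f`. -/
theorem stmt8 (a b c : ℝ) (h0a : 0 ≤ a) (hab : a ≤ b) (hbc : b ≤ c)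
    (hpos : 0 < a + (c - b)) (f : ℝ → ℕ) (hf : Measurable f) :
    (∀ i : ℕ,
      volume {x ∈ Set.Icc 0 a ∪ Set.Icc b c | f x = i} =
        volume {x ∈ Set.Icc 0 (a + (c - b)) |
          (if x ≤ a then f x else f (x + (b - a))) = i}) ∧
    (∀ i : ℕ,
      (⨅ t : ℝ, ∫ x in {x ∈ Set.Icc 0 (a + (c - b)) |
          (if x ≤ a then f x else f (x + (b - a))) = i}, |x - t|) ≤
        ⨅ t : ℝ, ∫ x in {x ∈ Set.Icc 0 a ∪ Set.Icc b c | f x = i}, |x - t|) :=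
  stmt8_general a b c h0a hab hbc f hf
end

section
/- Let S ⊂ [0,1] be a measurable set that is a union of two pieces S₁ ⊂ [0,a] and S₂ ⊂ [b,c] (0 ≤ a ≤ b ≤ c), and let S̃ = S₁ ∪ (S₂ - (b-a)). If t is a median of the uniform distribution on S with t ∈ [0,a], then t is also a median of the uniform distribution on S̃, and ∫_{S̃} |x - t| dx ≤ ∫_S |x - t| dx. -/
/-!
`S₁` lies in `(-∞, a]`, while `S₂` and its translate both lie in `[a, ∞)` and `t ≤ a`. Up to the
null set `{a}`, each second piece is therefore disjoint from `S₁` and from `{x ≤ t}`, and it adds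
exactly its measure to `{x ≥ t}`; translation preserves that measure, so the median equation
carries over. For the integrals, the translated piece still lies to the right of `t`, where
`|x - t| = x - t` can only decrease under the shift `x ↦ x - (b - a)`.
-/

open MeasureTheory Set

section SplitAtPoint

variable {A B : Set ℝ} {a t : ℝ}

lemma aedisjoint_of_subset_Iic_of_subset_Ici (hA : A ⊆ Iic a) (hB : B ⊆ Ici a) :
    AEDisjoint volume A B :=
  measure_mono_null (fun _ hx => le_antisymm (hA hx.1) (hB hx.2)) (measure_singleton a)

lemma volume_sep_union_le_of_subset_Ici (hB : B ⊆ Ici a) (ht : t ≤ a) :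
    volume {x ∈ A ∪ B | x ≤ t} = volume {x ∈ A | x ≤ t} := by
  have hnull : volume {x ∈ B | x ≤ t} = 0 :=
    measure_mono_null (fun x hx => le_antisymm (hx.2.trans ht) (hB hx.1)) (measure_singleton a)
  rw [show {x ∈ A ∪ B | x ≤ t} = {x ∈ A | x ≤ t} ∪ {x ∈ B | x ≤ t} from sep_union]
  exact measure_congr (union_ae_eq_left_of_ae_eq_empty (ae_eq_empty.2 hnull))

lemma volume_sep_union_ge_of_subset_Ici (hA : A ⊆ Iic a) (hB : B ⊆ Ici a)
    (hBm : MeasurableSet B) (ht : t ≤ a) :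
    volume {x ∈ A ∪ B | t ≤ x} = volume {x ∈ A | t ≤ x} + volume B := by
  have hBt : {x ∈ B | t ≤ x} = B := sep_eq_self_iff_mem_true.2 fun x hx => ht.trans (hB hx)
  rw [show {x ∈ A ∪ B | t ≤ x} = {x ∈ A | t ≤ x} ∪ {x ∈ B | t ≤ x} from sep_union, hBt]
  exact measure_union₀ hBm.nullMeasurableSet
    ((aedisjoint_of_subset_Iic_of_subset_Ici hA hB).mono (sep_subset _ _) subset_rfl)

lemma volume_sep_union_le_eq_ge_of_volume_eq {B' : Set ℝ} (hA : A ⊆ Iic a)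
    (hB : B ⊆ Ici a) (hB' : B' ⊆ Ici a) (hBm : MeasurableSet B) (hB'm : MeasurableSet B')
    (hvol : volume B = volume B') (ht : t ≤ a)
    (hmed : volume {x ∈ A ∪ B | x ≤ t} = volume {x ∈ A ∪ B | t ≤ x}) :
    volume {x ∈ A ∪ B' | x ≤ t} = volume {x ∈ A ∪ B' | t ≤ x} := by
  rw [volume_sep_union_le_of_subset_Ici hB ht, volume_sep_union_ge_of_subset_Ici hA hB hBm ht]
    at hmed
  rw [volume_sep_union_le_of_subset_Ici hB' ht, volume_sep_union_ge_of_subset_Ici hA hB' hB'm ht,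
    hmed, hvol]

lemma setIntegral_union_of_subset_Iic_of_subset_Ici {f : ℝ → ℝ} (hA : A ⊆ Iic a)
    (hB : B ⊆ Ici a) (hBm : MeasurableSet B) (hfA : IntegrableOn f A) (hfB : IntegrableOn f B) :
    ∫ x in A ∪ B, f x = (∫ x in A, f x) + ∫ x in B, f x :=
  setIntegral_union₀ (aedisjoint_of_subset_Iic_of_subset_Ici hA hB) hBm.nullMeasurableSet hfA hfB

end SplitAtPoint

section Translate

variable (d : ℝ) {s : Set ℝ}

lemma image_sub_const_eq_preimage_add_const (s : Set ℝ) :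
    (fun x => x - d) '' s = (fun x => x + d) ⁻¹' s := by
  simp_rw [sub_eq_add_neg]
  exact image_add_right'

lemma volume_image_sub_const (s : Set ℝ) : volume ((fun x => x - d) '' s) = volume s := by
  rw [image_sub_const_eq_preimage_add_const, measure_preimage_add_right]

lemma MeasurableSet.image_sub_const (hs : MeasurableSet s) :
    MeasurableSet ((fun x => x - d) '' s) := by
  rw [image_sub_const_eq_preimage_add_const]
  exact measurable_add_const d hs

lemma integrableOn_abs_sub_of_subset_Icc {p q : ℝ} (t : ℝ) (hs : s ⊆ Icc p q) :
    IntegrableOn (fun x => |x - t|) s :=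
  ((continuous_id.sub continuous_const).abs.integrableOn_Icc).mono_set hs

lemma setIntegral_abs_sub_image_sub_const_le {p q t : ℝ} (hs : MeasurableSet s)
    (hsub : s ⊆ Icc p q) (hd : 0 ≤ d) (htp : t + d ≤ p) :
    ∫ x in (fun x => x - d) '' s, |x - t| ≤ ∫ x in s, |x - t| := by
  rw [(measurePreserving_sub_right volume d).setIntegral_image_emb
    (MeasurableEquiv.subRight d).measurableEmbedding]
  refine setIntegral_mono_on ?_ (integrableOn_abs_sub_of_subset_Icc t hsub) hs fun x hx => ?_
  · simpa only [sub_sub] using integrableOn_abs_sub_of_subset_Icc (d + t) hsub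
  · have hpx := (hsub hx).1
    rw [abs_of_nonneg (by linarith), abs_of_nonneg (by linarith)]
    linarith

end Translate

theorem stmt9_general (a b c : ℝ) (hab : a ≤ b)
    (S₁ S₂ : Set ℝ) (hS₂m : MeasurableSet S₂)
    (hS₁ : S₁ ⊆ Set.Icc 0 a) (hS₂ : S₂ ⊆ Set.Icc b c)
    (t : ℝ) (ht : t ∈ Set.Icc 0 a)
    (hmed : volume {x ∈ S₁ ∪ S₂ | x ≤ t} = volume {x ∈ S₁ ∪ S₂ | t ≤ x}) :
    volume {x ∈ S₁ ∪ (fun x => x - (b - a)) '' S₂ | x ≤ t} =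
      volume {x ∈ S₁ ∪ (fun x => x - (b - a)) '' S₂ | t ≤ x} ∧
    ∫ x in S₁ ∪ (fun x => x - (b - a)) '' S₂, |x - t| ≤ ∫ x in S₁ ∪ S₂, |x - t| := by
  set T := (fun x => x - (b - a)) '' S₂
  have hTm : MeasurableSet T := hS₂m.image_sub_const _
  have hT : T ⊆ Icc a (c - (b - a)) := by
    simpa only [image_sub_const_Icc, sub_sub_cancel] using image_mono (f := (· - (b - a))) hS₂
  have hS₁a : S₁ ⊆ Iic a := hS₁.trans Icc_subset_Iic_self
  have hS₂a : S₂ ⊆ Ici a := hS₂.trans (Icc_subset_Ici_self.trans (Ici_subset_Ici.2 hab))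
  have hTa : T ⊆ Ici a := hT.trans Icc_subset_Ici_self
  refine ⟨volume_sep_union_le_eq_ge_of_volume_eq hS₁a hS₂a hTa hS₂m hTm
    (volume_image_sub_const _ S₂).symm ht.2 hmed, ?_⟩
  have hS₁f := integrableOn_abs_sub_of_subset_Icc t hS₁
  rw [setIntegral_union_of_subset_Iic_of_subset_Ici hS₁a hTa hTm hS₁f
      (integrableOn_abs_sub_of_subset_Icc t hT),
    setIntegral_union_of_subset_Iic_of_subset_Ici hS₁a hS₂a hS₂m hS₁f
      (integrableOn_abs_sub_of_subset_Icc t hS₂)]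
  exact add_le_add_right (setIntegral_abs_sub_image_sub_const_le _ hS₂m hS₂ (sub_nonneg.2 hab)
    (by linarith [ht.2] : t + (b - a) ≤ b)) _

/-- Let `S = S₁ ∪ S₂` with `S₁ ⊂ [0,a]`, `S₂ ⊂ [b,c]` measurable of positive total measure, and
`S̃ = S₁ ∪ (S₂ - (b-a))`. If `t ∈ [0,a]` is a median of the uniform distribution on `S`
(`|{x ∈ S : x ≤ t}| = |{x ∈ S : x ≥ t}|`), then `t` is also a median of the uniform distribution
on `S̃`, and `∫_{S̃} |x - t| dx ≤ ∫_S |x - t| dx`. -/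
theorem stmt9 (a b c : ℝ) (h0a : 0 ≤ a) (hab : a ≤ b) (hbc : b ≤ c)
    (S₁ S₂ : Set ℝ) (hS₁m : MeasurableSet S₁) (hS₂m : MeasurableSet S₂)
    (hS₁ : S₁ ⊆ Set.Icc 0 a) (hS₂ : S₂ ⊆ Set.Icc b c)
    (hpos : 0 < volume (S₁ ∪ S₂)) (t : ℝ) (ht : t ∈ Set.Icc 0 a)
    (hmed : volume {x ∈ S₁ ∪ S₂ | x ≤ t} = volume {x ∈ S₁ ∪ S₂ | t ≤ x}) :
    volume {x ∈ S₁ ∪ (fun x => x - (b - a)) '' S₂ | x ≤ t} =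
      volume {x ∈ S₁ ∪ (fun x => x - (b - a)) '' S₂ | t ≤ x} ∧
    ∫ x in S₁ ∪ (fun x => x - (b - a)) '' S₂, |x - t| ≤ ∫ x in S₁ ∪ S₂, |x - t| :=
  stmt9_general a b c hab S₁ S₂ hS₂m hS₁ hS₂ t ht hmed
end

section
/- The point-to-point entropy-distortion function of a Unif([0,1]) source under L1 distortion, H^U(Δ) = -⌊1/p⌋ p log p - q log q where p solves ⌊1/p⌋p² + q² = 4Δ and q = 1-⌊1/p⌋p, is strictly decreasing in Δ on (0, 1/4], equals log N at Δ = 1/(4N) for every positive integer N, and equals 0 at Δ = 1/4. -/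
/-- `H(p) = -⌊1/p⌋ p log p - q log q` with `q = 1 - ⌊1/p⌋ p`. -/
noncomputable def HofP (p : ℝ) : ℝ :=
  -((⌊1 / p⌋₊ : ℝ) * p * Real.log p) -
    (1 - (⌊1 / p⌋₊ : ℝ) * p) * Real.log (1 - (⌊1 / p⌋₊ : ℝ) * p)

open Real Set

/-- The `n`-th piece of `phiUnif`. -/
noncomputable def gU (n : ℕ) (p : ℝ) : ℝ := n * p ^ 2 + (1 - n * p) ^ 2

/-- The `n`-th piece of `HofP`. -/
noncomputable def hUx (n : ℕ) (p : ℝ) : ℝ := n * Real.negMulLog p + Real.negMulLog (1 - n * p)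

lemma floor_one_div_eq {n : ℕ} (hn : 1 ≤ n) {p : ℝ} (h1 : 1 / ((n : ℝ) + 1) < p)
    (h2 : p ≤ 1 / (n : ℝ)) : ⌊1 / p⌋₊ = n := by
  have hn0 : (0 : ℝ) < n := by exact_mod_cast hn
  have hp0 : 0 < p := lt_trans (by positivity) h1
  rw [Nat.floor_eq_iff (by positivity)]
  rw [le_div_iff₀ hn0] at h2
  rw [div_lt_iff₀ (by positivity)] at h1
  constructor
  · rw [le_div_iff₀ hp0]; nlinarith
  · rw [div_lt_iff₀ hp0]; nlinarith

lemma piece_of_mem {p : ℝ} (hp : p ∈ Set.Ioc (0 : ℝ) 1) :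
    1 ≤ ⌊1 / p⌋₊ ∧ 1 / ((⌊1 / p⌋₊ : ℝ) + 1) < p ∧ p ≤ 1 / (⌊1 / p⌋₊ : ℝ) := by
  have hp0 := hp.1
  have h1 : (1 : ℝ) ≤ 1 / p := by
    rw [le_div_iff₀ hp0]; linarith [hp.2]
  have hn1 : 1 ≤ ⌊1 / p⌋₊ := Nat.le_floor (by exact_mod_cast h1)
  have hn0 : (0 : ℝ) < (⌊1 / p⌋₊ : ℝ) := by exact_mod_cast hn1
  have hfl : (⌊1 / p⌋₊ : ℝ) ≤ 1 / p := Nat.floor_le (by positivity)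
  have hfu : 1 / p < (⌊1 / p⌋₊ : ℝ) + 1 := Nat.lt_floor_add_one _
  refine ⟨hn1, ?_, ?_⟩
  · rw [div_lt_iff₀ (by positivity)]
    rw [div_lt_iff₀ hp0] at hfu
    nlinarith
  · rw [le_div_iff₀ hn0]
    rw [le_div_iff₀ hp0] at hfl
    nlinarith

lemma gU_left {n : ℕ} : gU n (1 / ((n : ℝ) + 1)) = 1 / ((n : ℝ) + 1) := by
  have h : ((n : ℝ) + 1) ≠ 0 := by positivity
  unfold gU; field_simp; ring

lemma gU_right {n : ℕ} (hn : 1 ≤ n) : gU n (1 / (n : ℝ)) = 1 / (n : ℝ) := by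
  have hn0 : (0 : ℝ) < n := by exact_mod_cast hn
  unfold gU; field_simp
  ring

lemma phiUnif_eq_gU {n : ℕ} (hn : 1 ≤ n) {p : ℝ}
    (hp : p ∈ Set.Icc (1 / ((n : ℝ) + 1)) (1 / (n : ℝ))) : phiUnif p = gU n p := by
  rcases eq_or_lt_of_le hp.1 with he | hlt
  · have hne : ((n : ℝ) + 1) ≠ 0 := by positivity
    have hpv : 1 / p = (n : ℝ) + 1 := by rw [← he]; field_simp
    have hf : ⌊1 / p⌋₊ = n + 1 := by
      rw [hpv]
      rw [show ((n : ℝ) + 1) = ((n + 1 : ℕ) : ℝ) by push_cast; ring, Nat.floor_natCast]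
    rw [phiUnif, gU, hf, ← he]
    push_cast
    field_simp
    ring
  · rw [phiUnif, gU, floor_one_div_eq hn hlt hp.2]

lemma HofP_eq_general (p : ℝ) :
    HofP p = (⌊1 / p⌋₊ : ℝ) * Real.negMulLog p +
      Real.negMulLog (1 - (⌊1 / p⌋₊ : ℝ) * p) := by
  simp only [HofP, Real.negMulLog]; ring

lemma HofP_eq_hUx {n : ℕ} (hn : 1 ≤ n) {p : ℝ}
    (hp : p ∈ Set.Icc (1 / ((n : ℝ) + 1)) (1 / (n : ℝ))) : HofP p = hUx n p := by
  rcases eq_or_lt_of_le hp.1 with he | hlt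
  · have hne : ((n : ℝ) + 1) ≠ 0 := by positivity
    have hpv : 1 / p = (n : ℝ) + 1 := by rw [← he]; field_simp
    have hf : ⌊1 / p⌋₊ = n + 1 := by
      rw [hpv]
      rw [show ((n : ℝ) + 1) = ((n + 1 : ℕ) : ℝ) by push_cast; ring, Nat.floor_natCast]
    have h1 : 1 - ((n : ℝ) + 1) * p = 0 := by rw [← he]; field_simp; ring
    have h2 : 1 - (n : ℝ) * p = p := by
      rw [← he]; field_simp; ring
    rw [HofP_eq_general, hUx, hf, h2]
    push_cast
    rw [h1]
    simp [Real.negMulLog_zero]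
    ring
  · rw [HofP_eq_general, hUx, floor_one_div_eq hn hlt hp.2]

lemma gU_strictMono {n : ℕ} (hn : 1 ≤ n) :
    StrictMonoOn (gU n) (Set.Icc (1 / ((n : ℝ) + 1)) (1 / (n : ℝ))) := by
  intro a ha b hb hab
  have hn0 : (0 : ℝ) < n := by exact_mod_cast hn
  have ha1 : 1 / ((n : ℝ) + 1) ≤ a := ha.1
  rw [div_le_iff₀ (by positivity)] at ha1
  simp only [gU]
  have hfac : (0 : ℝ) < (n : ℝ) * (b - a) * (((n : ℝ) + 1) * (a + b) - 2) := by
    apply mul_pos (mul_pos hn0 (by linarith))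
    nlinarith
  nlinarith [hfac]

lemma hUx_strictAnti {n : ℕ} (hn : 1 ≤ n) :
    StrictAntiOn (hUx n) (Set.Icc (1 / ((n : ℝ) + 1)) (1 / (n : ℝ))) := by
  have hn0 : (0 : ℝ) < n := by exact_mod_cast hn
  apply strictAntiOn_of_deriv_neg (convex_Icc _ _)
  · apply Continuous.continuousOn
    unfold hUx
    fun_prop
  · intro x hx
    rw [interior_Icc] at hx
    have hx1 : 1 / ((n : ℝ) + 1) < x := hx.1
    have hx2 : x < 1 / (n : ℝ) := hx.2
    have hx0 : 0 < x := lt_trans (by positivity) hx1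
    have hq0 : 0 < 1 - (n : ℝ) * x := by
      rw [lt_div_iff₀ hn0] at hx2; linarith
    have hqx : 1 - (n : ℝ) * x < x := by
      rw [div_lt_iff₀ (by positivity)] at hx1; nlinarith
    have hd1 : HasDerivAt (fun p : ℝ => (n : ℝ) * Real.negMulLog p)
        ((n : ℝ) * (-Real.log x - 1)) x :=
      (Real.hasDerivAt_negMulLog (ne_of_gt hx0)).const_mul _
    have hd2i : HasDerivAt (fun p : ℝ => 1 - (n : ℝ) * p) (-(n : ℝ)) x := by
      simpa using ((hasDerivAt_id x).const_mul (n : ℝ)).const_sub 1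
    have hd2 : HasDerivAt (fun p : ℝ => Real.negMulLog (1 - (n : ℝ) * p))
        ((-Real.log (1 - (n : ℝ) * x) - 1) * (-(n : ℝ))) x :=
      by have := (Real.hasDerivAt_negMulLog (ne_of_gt hq0)).comp x hd2i; exact this
    have hd : HasDerivAt (hUx n)
        ((n : ℝ) * (-Real.log x - 1) + (-Real.log (1 - (n : ℝ) * x) - 1) * (-(n : ℝ))) x :=
      hd1.add hd2
    rw [hd.deriv]
    have hlog : Real.log (1 - (n : ℝ) * x) < Real.log x := Real.log_lt_log hq0 hqx
    nlinarith

lemma hUx_right {n : ℕ} (hn : 1 ≤ n) : hUx n (1 / (n : ℝ)) = Real.log n := by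
  have hn0 : (0 : ℝ) < n := by exact_mod_cast hn
  have h1 : 1 - (n : ℝ) * (1 / (n : ℝ)) = 0 := by field_simp; ring
  rw [hUx, h1, Real.negMulLog_zero,
    show Real.negMulLog (1 / (n : ℝ)) = -(1 / (n : ℝ)) * Real.log (1 / (n : ℝ)) from rfl,
    one_div, Real.log_inv]
  field_simp
  ring

lemma hUx_left {n : ℕ} : hUx n (1 / ((n : ℝ) + 1)) = Real.log ((n : ℝ) + 1) := by
  have hne : (0 : ℝ) < (n : ℝ) + 1 := by positivity
  have h1 : 1 - (n : ℝ) * (1 / ((n : ℝ) + 1)) = 1 / ((n : ℝ) + 1) := by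
    field_simp
    ring
  rw [hUx, h1,
    show Real.negMulLog (1 / ((n : ℝ) + 1)) =
      -(1 / ((n : ℝ) + 1)) * Real.log (1 / ((n : ℝ) + 1)) from rfl,
    one_div, Real.log_inv]
  field_simp

lemma left_le_right {n : ℕ} (hn : 1 ≤ n) : 1 / ((n : ℝ) + 1) ≤ 1 / (n : ℝ) := by
  have hn0 : (0 : ℝ) < n := by exact_mod_cast hn
  apply one_div_le_one_div_of_le hn0; linarith

lemma phiUnif_strictMono : StrictMonoOn phiUnif (Set.Ioc (0 : ℝ) 1) := by
  intro a ha b hb hab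
  obtain ⟨hna, ha1, ha2⟩ := piece_of_mem ha
  obtain ⟨hnb, hb1, hb2⟩ := piece_of_mem hb
  set na := ⌊1 / a⌋₊
  set nb := ⌊1 / b⌋₊
  have hamem : a ∈ Set.Icc (1 / ((na : ℝ) + 1)) (1 / (na : ℝ)) := ⟨le_of_lt ha1, ha2⟩
  have hbmem : b ∈ Set.Icc (1 / ((nb : ℝ) + 1)) (1 / (nb : ℝ)) := ⟨le_of_lt hb1, hb2⟩
  have hna0 : (0 : ℝ) < na := by exact_mod_cast hna
  have hnb0 : (0 : ℝ) < nb := by exact_mod_cast hnb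
  have hle : nb ≤ na := by
    by_contra h
    push_neg at h
    have : (na : ℝ) + 1 ≤ (nb : ℝ) := by exact_mod_cast h
    have h1 : 1 / ((nb : ℝ)) ≤ 1 / ((na : ℝ) + 1) :=
      one_div_le_one_div_of_le (by positivity) this
    linarith [lt_of_le_of_lt hb2 (lt_of_le_of_lt h1 ha1)]
  rcases eq_or_lt_of_le hle with heq | hlt
  · rw [phiUnif_eq_gU hna hamem, phiUnif_eq_gU hnb hbmem, heq]
    exact gU_strictMono hna hamem (heq ▸ hbmem) hab
  · have h1 : phiUnif a ≤ 1 / (na : ℝ) := by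
      rw [phiUnif_eq_gU hna hamem, ← gU_right hna]
      exact (gU_strictMono hna).monotoneOn hamem
        ⟨left_le_right hna, le_refl _⟩ ha2
    have h2 : 1 / ((nb : ℝ) + 1) < phiUnif b := by
      rw [phiUnif_eq_gU hnb hbmem, ← gU_left]
      exact gU_strictMono hnb ⟨le_refl _, left_le_right hnb⟩ hbmem hb1
    have h3 : 1 / (na : ℝ) ≤ 1 / ((nb : ℝ) + 1) := by
      apply one_div_le_one_div_of_le (by positivity)
      exact_mod_cast hlt
    linarith

lemma HofP_strictAnti : StrictAntiOn HofP (Set.Ioc (0 : ℝ) 1) := by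
  intro a ha b hb hab
  obtain ⟨hna, ha1, ha2⟩ := piece_of_mem ha
  obtain ⟨hnb, hb1, hb2⟩ := piece_of_mem hb
  set na := ⌊1 / a⌋₊
  set nb := ⌊1 / b⌋₊
  have hamem : a ∈ Set.Icc (1 / ((na : ℝ) + 1)) (1 / (na : ℝ)) := ⟨le_of_lt ha1, ha2⟩
  have hbmem : b ∈ Set.Icc (1 / ((nb : ℝ) + 1)) (1 / (nb : ℝ)) := ⟨le_of_lt hb1, hb2⟩
  have hna0 : (0 : ℝ) < na := by exact_mod_cast hna
  have hnb0 : (0 : ℝ) < nb := by exact_mod_cast hnb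
  have hle : nb ≤ na := by
    by_contra h
    push_neg at h
    have : (na : ℝ) + 1 ≤ (nb : ℝ) := by exact_mod_cast h
    have h1 : 1 / ((nb : ℝ)) ≤ 1 / ((na : ℝ) + 1) :=
      one_div_le_one_div_of_le (by positivity) this
    linarith [lt_of_le_of_lt hb2 (lt_of_le_of_lt h1 ha1)]
  rcases eq_or_lt_of_le hle with heq | hlt
  · rw [HofP_eq_hUx hna hamem, HofP_eq_hUx hnb hbmem, heq]
    exact hUx_strictAnti hna hamem (heq ▸ hbmem) hab
  · have h1 : Real.log (na : ℝ) ≤ HofP a := by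
      rw [HofP_eq_hUx hna hamem, ← hUx_right hna]
      exact (hUx_strictAnti hna).antitoneOn hamem
        ⟨left_le_right hna, le_refl _⟩ ha2
    have h2 : HofP b < Real.log ((nb : ℝ) + 1) := by
      rw [HofP_eq_hUx hnb hbmem, ← hUx_left]
      exact hUx_strictAnti hnb ⟨le_refl _, left_le_right hnb⟩ hbmem hb1
    have h3 : Real.log ((nb : ℝ) + 1) ≤ Real.log (na : ℝ) := by
      apply Real.log_le_log (by positivity)
      exact_mod_cast hlt
    linarith

lemma phi_surj {Δ : ℝ} (hΔ : Δ ∈ Set.Ioc (0 : ℝ) (1 / 4)) :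
    ∃ p ∈ Set.Ioc (0 : ℝ) 1, phiUnif p = 4 * Δ := by
  have ht : (4 * Δ) ∈ Set.Ioc (0 : ℝ) 1 := ⟨by linarith [hΔ.1], by linarith [hΔ.2]⟩
  obtain ⟨hn, h1, h2⟩ := piece_of_mem ht
  set n := ⌊1 / (4 * Δ)⌋₊
  have hn0 : (0 : ℝ) < n := by exact_mod_cast hn
  have hcont : ContinuousOn (gU n) (Set.Icc (1 / ((n : ℝ) + 1)) (1 / (n : ℝ))) := by
    apply Continuous.continuousOn; unfold gU; fun_prop
  have hsub := intermediate_value_Ioc (left_le_right hn) hcont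
  have hmem : 4 * Δ ∈ Set.Ioc (gU n (1 / ((n : ℝ) + 1))) (gU n (1 / (n : ℝ))) := by
    rw [gU_left, gU_right hn]; exact ⟨h1, h2⟩
  obtain ⟨p, hp, hgp⟩ := hsub hmem
  refine ⟨p, ⟨lt_trans (by positivity) hp.1, ?_⟩, ?_⟩
  · calc p ≤ 1 / (n : ℝ) := hp.2
      _ ≤ 1 := by
        have h1n : (1 : ℝ) ≤ n := by exact_mod_cast hn
        rw [div_le_iff₀ hn0]; linarith
  · rw [phiUnif_eq_gU hn ⟨le_of_lt hp.1, hp.2⟩, hgp]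

lemma phiUnif_one_div {n : ℕ} (hn : 1 ≤ n) : phiUnif (1 / (n : ℝ)) = 1 / (n : ℝ) := by
  have hn0 : (0 : ℝ) < n := by exact_mod_cast hn
  rw [phiUnif_eq_gU hn ⟨left_le_right hn, le_refl _⟩, gU_right hn]

lemma HofP_one_div {n : ℕ} (hn : 1 ≤ n) : HofP (1 / (n : ℝ)) = Real.log n := by
  have hn0 : (0 : ℝ) < n := by exact_mod_cast hn
  rw [HofP_eq_hUx hn ⟨left_le_right hn, le_refl _⟩, hUx_right hn]

/-- Any function `HU` on `(0,1/4]` satisfying `HU(Δ) = -⌊1/p⌋ p log p - q log q` whenever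
`p ∈ (0,1]` solves `⌊1/p⌋p² + q² = 4Δ` (i.e. the entropy–distortion function of `Unif([0,1])`
under `L1` distortion) is strictly decreasing on `(0,1/4]`, equals `log N` at `Δ = 1/(4N)`
for every positive integer `N`, and equals `0` at `Δ = 1/4`. -/
theorem stmt15 (HU : ℝ → ℝ)
    (hHU : ∀ Δ ∈ Set.Ioc (0 : ℝ) (1 / 4), ∀ p ∈ Set.Ioc (0 : ℝ) 1,
      phiUnif p = 4 * Δ → HU Δ = HofP p) :
    StrictAntiOn HU (Set.Ioc 0 (1 / 4)) ∧
    (∀ N : ℕ, 0 < N → HU (1 / (4 * N)) = Real.log N) ∧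
    HU (1 / 4) = 0 := by
  have key : ∀ N : ℕ, 0 < N → HU (1 / (4 * N)) = Real.log N := by
    intro N hN
    have hN0 : (0 : ℝ) < N := by exact_mod_cast hN
    have hΔ : (1 / (4 * (N : ℝ))) ∈ Set.Ioc (0 : ℝ) (1 / 4) := by
      constructor
      · positivity
      · have hN1 : (1 : ℝ) ≤ N := by exact_mod_cast hN
        apply one_div_le_one_div_of_le (by norm_num)
        linarith
    have hp : (1 / (N : ℝ)) ∈ Set.Ioc (0 : ℝ) 1 := by
      constructor
      · positivity
      · have hN1 : (1 : ℝ) ≤ N := by exact_mod_cast hN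
        rw [div_le_iff₀ hN0]; linarith
    have hphi : phiUnif (1 / (N : ℝ)) = 4 * (1 / (4 * (N : ℝ))) := by
      rw [phiUnif_one_div hN]
      field_simp
    rw [hHU _ hΔ _ hp hphi, HofP_one_div hN]
  refine ⟨?_, key, ?_⟩
  · intro Δ₁ h1 Δ₂ h2 hlt
    obtain ⟨p₁, hp₁, he₁⟩ := phi_surj h1
    obtain ⟨p₂, hp₂, he₂⟩ := phi_surj h2
    rw [hHU _ h1 _ hp₁ he₁, hHU _ h2 _ hp₂ he₂]
    have hφ : phiUnif p₁ < phiUnif p₂ := by rw [he₁, he₂]; linarith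
    have hp12 : p₁ < p₂ := (phiUnif_strictMono.lt_iff_lt hp₁ hp₂).mp hφ
    exact HofP_strictAnti hp₁ hp₂ hp12
  · have := key 1 (by norm_num)
    simpa using this
end

section
/- For a uniform source on [0,1] with quantized side information Y_q taking K equiprobable values, where X given Y_q = k is uniform on [(k-1)/K, k/K], the conditional entropy-distortion function satisfies H_C^q(Δ) ≤ H^U(KΔ) for all Δ ∈ (0, 1/(4K)], where H^U is the point-to-point entropy-distortion function of Unif([0,1]) under L1 distortion. -/
open MeasureTheory

private lemma ae_ne_const (c : ℝ) : ∀ᵐ t : ℝ, t ≠ c := by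
  have h0 : volume {c} = 0 := measure_singleton c
  rw [Filter.eventually_iff, MeasureTheory.mem_ae_iff]
  convert h0 using 2
  ext t
  simp

private lemma integral_abs_sub_eq {a b c : ℝ} (h1 : a ≤ c) (h2 : c ≤ b) :
    ∫ t in a..b, |t - c| = ((c - a) ^ 2 + (b - c) ^ 2) / 2 := by
  have hcont : Continuous fun t : ℝ => |t - c| := (continuous_id.sub continuous_const).abs
  rw [← intervalIntegral.integral_add_adjacent_intervals (a := a) (b := c) (c := b)
    (hcont.intervalIntegrable _ _) (hcont.intervalIntegrable _ _)]
  have e1 : ∫ t in a..c, |t - c| = ∫ t in a..c, (c - t) := by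
    apply intervalIntegral.integral_congr
    intro t ht
    rw [Set.uIcc_of_le h1] at ht
    show |t - c| = c - t
    rw [abs_of_nonpos (by linarith [ht.2])]
    ring
  have e2 : ∫ t in c..b, |t - c| = ∫ t in c..b, (t - c) := by
    apply intervalIntegral.integral_congr
    intro t ht
    rw [Set.uIcc_of_le h2] at ht
    show |t - c| = t - c
    exact abs_of_nonneg (by linarith [ht.1])
  rw [e1, e2,
    intervalIntegral.integral_sub intervalIntegrable_const
      (continuous_id'.intervalIntegrable _ _),
    intervalIntegral.integral_sub (continuous_id'.intervalIntegrable _ _)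
      intervalIntegrable_const,
    integral_id, intervalIntegral.integral_const, integral_id,
    intervalIntegral.integral_const, smul_eq_mul, smul_eq_mul]
  ring

private lemma vol_toReal_eq {S : Set ℝ} {a b : ℝ} (hab : a ≤ b)
    (h1 : Set.Ioo a b ⊆ S) (h2 : S ⊆ Set.Icc a b) :
    (volume S).toReal = b - a := by
  have hv : volume S = ENNReal.ofReal (b - a) := by
    apply le_antisymm
    · calc volume S ≤ volume (Set.Icc a b) := measure_mono h2
        _ = ENNReal.ofReal (b - a) := Real.volume_Icc
    · calc ENNReal.ofReal (b - a) = volume (Set.Ioo a b) := Real.volume_Ioo.symm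
        _ ≤ volume S := measure_mono h1
  rw [hv, ENNReal.toReal_ofReal (by linarith)]

set_option maxHeartbeats 1000000 in
/-- Upper bound `H_C^q(Δ) ≤ H^U(KΔ)` for quantized side information: for `X ~ Unif([0,1])`,
`Y_q = ⌈KX⌉`, and any `Δ ∈ (0, 1/(4K)]`, writing `H^U(KΔ) = -⌊1/p⌋ p log p - q log q` where
`p ∈ (0,1]` solves `⌊1/p⌋p² + (1-⌊1/p⌋p)² = 4·KΔ`, there is an encoder–decoder pair
(`f : ℝ → ℕ` measurable, `g : ℕ × ℕ → ℝ`, the decoder also seeing `Y_q`) with expected `L1`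
distortion at most `Δ` whose conditional entropy `H(f(X)|Y_q)` is at most `H^U(KΔ)`; hence the
infimum defining `H_C^q(Δ)` is at most `H^U(KΔ)`. -/
theorem stmt18 (K : ℕ) (hK : 1 ≤ K) (Δ : ℝ) (hΔ : 0 < Δ) (hΔ' : Δ ≤ 1 / (4 * K))
    (p : ℝ) (hp : p ∈ Set.Ioc (0 : ℝ) 1)
    (hsolve : (⌊1 / p⌋₊ : ℝ) * p ^ 2 + (1 - (⌊1 / p⌋₊ : ℝ) * p) ^ 2 = 4 * ((K : ℝ) * Δ)) :
    ∃ (f : ℝ → ℕ) (g : ℕ × ℕ → ℝ), Measurable f ∧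
      (∫ x in (0 : ℝ)..1, |x - g (f x, ⌈(K : ℝ) * x⌉₊)|) ≤ Δ ∧
      (∑ k ∈ Finset.range K, (1 / (K : ℝ)) *
          ∑' i : ℕ, Real.negMulLog ((K : ℝ) *
            (volume {x ∈ Set.Ioc ((k : ℝ) / K) (((k : ℝ) + 1) / K) | f x = i}).toReal)) ≤
        -((⌊1 / p⌋₊ : ℝ) * p * Real.log p) -
          (1 - (⌊1 / p⌋₊ : ℝ) * p) * Real.log (1 - (⌊1 / p⌋₊ : ℝ) * p) := by
  obtain ⟨hp0, hp1⟩ := hp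
  set m : ℕ := ⌊1 / p⌋₊ with hm
  set q : ℝ := 1 - (m : ℝ) * p with hq
  have hK0 : (0 : ℝ) < K := by exact_mod_cast hK
  have hm1 : 1 ≤ m := Nat.le_floor (by rw [Nat.cast_one, le_div_iff₀ hp0, one_mul]; exact hp1)
  have hm1R : (1 : ℝ) ≤ (m : ℝ) := by exact_mod_cast hm1
  have hmp1 : (m : ℝ) * p ≤ 1 := by
    have h1 : (m : ℝ) ≤ 1 / p := Nat.floor_le (by positivity)
    have := mul_le_mul_of_nonneg_right h1 hp0.le
    rwa [one_div, inv_mul_cancel₀ hp0.ne'] at this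
  have hq0 : 0 ≤ q := by rw [hq]; linarith
  set c : ℕ → ℝ := fun i => if i < m then ((i : ℝ) + 1 / 2) * p else ((m : ℝ) * p + 1) / 2
    with hcdef
  set f : ℝ → ℕ := fun x =>
    min m ⌊((K : ℝ) * x - ((⌈(K : ℝ) * x⌉ : ℤ) : ℝ) + 1) / p⌋₊ with hfdef
  set g : ℕ × ℕ → ℝ := fun ik => ((ik.2 : ℝ) - 1 + c ik.1) / K with hgdef
  set φ : ℝ → ℝ := fun t => |t - c (min m ⌊t / p⌋₊)| with hφdef
  -- bounds on c
  have hc0 : ∀ j, 0 ≤ c j := by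
    intro j
    simp only [hcdef]
    split
    · have : (0:ℝ) ≤ (j : ℝ) + 1 / 2 := by positivity
      exact mul_nonneg this hp0.le
    · have : (0:ℝ) ≤ (m : ℝ) * p := mul_nonneg (Nat.cast_nonneg m) hp0.le
      linarith
  have hc1 : ∀ j, c j ≤ 1 := by
    intro j
    simp only [hcdef]
    split
    · rename_i h
      have hj : (j : ℝ) + 1 ≤ (m : ℝ) := by exact_mod_cast h
      nlinarith
    · linarith
  -- measurability of f
  have hmeasf : Measurable f := by
    apply Measurable.min measurable_const
    apply Measurable.nat_floor
    apply Measurable.div_const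
    apply Measurable.add_const
    apply Measurable.sub (measurable_id.const_mul _)
    exact Measurable.comp (measurable_of_countable _) (measurable_id.const_mul _).ceil
  -- f on a cell
  have hfcell : ∀ (k : ℕ) (x : ℝ), x ∈ Set.Ioc ((k : ℝ) / K) (((k : ℝ) + 1) / K) →
      f x = min m ⌊((K : ℝ) * x - k) / p⌋₊ := by
    intro k x hx
    have hx1 : (k : ℝ) < (K : ℝ) * x := by
      have := (div_lt_iff₀ hK0).mp hx.1
      linarith [this]
    have hx2 : (K : ℝ) * x ≤ (k : ℝ) + 1 := by
      have := (le_div_iff₀ hK0).mp hx.2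
      linarith [this]
    have hceil : ((⌈(K : ℝ) * x⌉ : ℤ) : ℝ) = (k : ℝ) + 1 := by
      have h : ⌈(K : ℝ) * x⌉ = (k : ℤ) + 1 := by
        rw [Int.ceil_eq_iff]
        constructor
        · push_cast; linarith
        · push_cast; linarith
      rw [h]; push_cast; ring
    have hA : (K : ℝ) * x - ((⌈(K : ℝ) * x⌉ : ℤ) : ℝ) + 1 = (K : ℝ) * x - k := by
      rw [hceil]; ring
    simp only [hfdef, hA]
  -- nat ceil on a cell
  have hceilN : ∀ (k : ℕ) (x : ℝ), x ∈ Set.Ioc ((k : ℝ) / K) (((k : ℝ) + 1) / K) →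
      ⌈(K : ℝ) * x⌉₊ = k + 1 := by
    intro k x hx
    have hx1 : (k : ℝ) < (K : ℝ) * x := by
      have := (div_lt_iff₀ hK0).mp hx.1; linarith [this]
    have hx2 : (K : ℝ) * x ≤ (k : ℝ) + 1 := by
      have := (le_div_iff₀ hK0).mp hx.2; linarith [this]
    rw [Nat.ceil_eq_iff (Nat.succ_ne_zero k)]
    constructor
    · simpa using hx1
    · push_cast; linarith
  have hle : ∀ k : ℕ, (k : ℝ) / K ≤ ((k : ℝ) + 1) / K := by
    intro k
    exact div_le_div_of_nonneg_right (by linarith) hK0.le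
  -- φ measurable and interval integrable
  have hφmeas : Measurable φ := by
    apply Measurable.abs
    apply Measurable.sub measurable_id
    exact (measurable_of_countable c).comp
      (Measurable.min measurable_const (measurable_id.div_const p).nat_floor)
  have hφint : ∀ a b : ℝ, IntervalIntegrable φ volume a b := by
    intro a b
    rw [intervalIntegrable_iff]
    apply Measure.integrableOn_of_bounded (M := |a| + |b| + 1)
    · rw [Set.uIoc]
      exact measure_Ioc_lt_top.ne
    · exact hφmeas.aestronglyMeasurable
    · rw [ae_restrict_iff' measurableSet_uIoc]
      apply ae_of_all
      intro t ht
      have ht1 : a ⊓ b < t := ht.1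
      have ht2 : t ≤ a ⊔ b := ht.2
      have hta : t ≤ |a| + |b| := le_trans ht2 (sup_le
        (by linarith [le_abs_self a, abs_nonneg b]) (by linarith [le_abs_self b, abs_nonneg a]))
      have htb : -(|a| + |b|) ≤ t := le_trans (le_inf
        (by linarith [neg_abs_le a, abs_nonneg b]) (by linarith [neg_abs_le b, abs_nonneg a]))
        ht1.le
      have habs : |t| ≤ |a| + |b| := abs_le.mpr ⟨htb, hta⟩
      have hcb := hc0 (min m ⌊t / p⌋₊)
      have hcb' := hc1 (min m ⌊t / p⌋₊)
      simp only [hφdef, Real.norm_eq_abs, abs_abs]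
      calc |t - c (min m ⌊t / p⌋₊)| ≤ |t| + |c (min m ⌊t / p⌋₊)| := abs_sub _ _
        _ ≤ (|a| + |b|) + 1 := by
            have : |c (min m ⌊t / p⌋₊)| ≤ 1 := abs_le.mpr ⟨by linarith, hcb'⟩
            linarith
  -- value of ∫₀¹ φ
  have hφval : ∫ t in (0:ℝ)..1, φ t = ((m : ℝ) * p ^ 2 + q ^ 2) / 4 := by
    have hterm : ∀ i : ℕ, i < m →
        ∫ t in ((i : ℝ) * p)..((((i + 1) : ℕ) : ℝ) * p), φ t = p ^ 2 / 4 := by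
      intro i hi
      push_cast
      have hab : (i : ℝ) * p ≤ ((i : ℝ) + 1) * p := by nlinarith
      have hcongr : ∫ t in ((i : ℝ) * p)..(((i : ℝ) + 1) * p), φ t
          = ∫ t in ((i : ℝ) * p)..(((i : ℝ) + 1) * p), |t - ((i : ℝ) + 1 / 2) * p| := by
        apply intervalIntegral.integral_congr_ae
        filter_upwards [ae_ne_const (((i : ℝ) + 1) * p)] with t htne ht
        rw [Set.uIoc_of_le hab] at ht
        have ht1 : (i : ℝ) * p < t := ht.1
        have ht2 : t < ((i : ℝ) + 1) * p := lt_of_le_of_ne ht.2 htne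
        have hip : (0:ℝ) ≤ (i : ℝ) * p := by positivity
        have hfl : ⌊t / p⌋₊ = i := by
          rw [Nat.floor_eq_iff (div_nonneg (by linarith) hp0.le)]
          constructor
          · rw [le_div_iff₀ hp0]; linarith
          · rw [div_lt_iff₀ hp0]; push_cast; linarith
        simp only [hφdef, hfl, min_eq_right hi.le, hcdef, if_pos hi]
      rw [hcongr, integral_abs_sub_eq (by nlinarith) (by nlinarith)]
      ring
    have hsplit : ∑ i ∈ Finset.range m,
        ∫ t in ((i : ℝ) * p)..((((i + 1) : ℕ) : ℝ) * p), φ t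
        = ∫ t in (((0:ℕ) : ℝ) * p)..(((m : ℕ) : ℝ) * p), φ t :=
      intervalIntegral.sum_integral_adjacent_intervals (a := fun i : ℕ => (i : ℝ) * p)
        (fun k _ => hφint _ _)
    have hlast : ∫ t in ((m : ℝ) * p)..1, φ t = q ^ 2 / 4 := by
      have hcongr : ∫ t in ((m : ℝ) * p)..1, φ t
          = ∫ t in ((m : ℝ) * p)..1, |t - ((m : ℝ) * p + 1) / 2| := by
        apply intervalIntegral.integral_congr_ae
        apply ae_of_all
        intro t ht
        rw [Set.uIoc_of_le hmp1] at ht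
        have hfl : m ≤ ⌊t / p⌋₊ := Nat.le_floor (by rw [le_div_iff₀ hp0]; linarith [ht.1])
        simp only [hφdef, min_eq_left hfl, hcdef, if_neg (lt_irrefl m)]
      rw [hcongr, integral_abs_sub_eq (by linarith) (by linarith)]
      rw [hq]; ring
    have h01 : ∫ t in (0:ℝ)..1, φ t
        = (∫ t in (0:ℝ)..((m : ℝ) * p), φ t) + ∫ t in ((m : ℝ) * p)..1, φ t :=
      (intervalIntegral.integral_add_adjacent_intervals (hφint _ _) (hφint _ _)).symm
    have hz : (((0:ℕ) : ℝ) * p) = (0:ℝ) := by push_cast; ring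
    rw [h01, ← hz]
    rw [show ((m : ℝ) * p) = (((m : ℕ) : ℝ) * p) from rfl]
    rw [← hsplit, Finset.sum_congr rfl (fun i hi => hterm i (Finset.mem_range.mp hi)),
      Finset.sum_const, Finset.card_range, nsmul_eq_mul, hlast, hq]
    ring
  -- pointwise form of the distortion integrand on each cell
  have hF : ∀ (k : ℕ) (x : ℝ), x ∈ Set.Ioc ((k : ℝ) / K) (((k : ℝ) + 1) / K) →
      |x - g (f x, ⌈(K : ℝ) * x⌉₊)| = φ ((K : ℝ) * x - k) / K := by
    intro k x hx
    rw [hceilN k x hx]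
    have h1 : x - g (f x, k + 1) = ((K : ℝ) * x - k - c (f x)) / K := by
      simp only [hgdef]
      push_cast
      field_simp
      ring
    rw [h1, abs_div, abs_of_pos hK0, hfcell k x hx]
  -- integrability of the distortion integrand on each cell
  have hFint : ∀ k : ℕ, k < K → IntervalIntegrable
      (fun x => |x - g (f x, ⌈(K : ℝ) * x⌉₊)|) volume ((k : ℝ) / K) (((k : ℝ) + 1) / K) := by
    intro k hk
    rw [intervalIntegrable_iff]
    apply Measure.integrableOn_of_bounded (M := 2)
    · rw [Set.uIoc]
      exact measure_Ioc_lt_top.ne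
    · apply Measurable.aestronglyMeasurable
      apply Measurable.abs
      apply Measurable.sub measurable_id
      exact (measurable_of_countable g).comp
        (hmeasf.prodMk (measurable_id.const_mul _).nat_ceil)
    · rw [ae_restrict_iff' measurableSet_uIoc]
      apply ae_of_all
      intro x hx
      rw [Set.uIoc_of_le (hle k)] at hx
      have hx0 : 0 < x := lt_of_le_of_lt (by positivity) hx.1
      have hkK : (k : ℝ) + 1 ≤ K := by
        have : (k : ℕ) + 1 ≤ K := hk
        exact_mod_cast this
      have hx1 : x ≤ 1 := le_trans hx.2 (by rw [div_le_one hK0]; linarith)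
      have hj1 : 0 < ⌈(K : ℝ) * x⌉₊ := Nat.ceil_pos.mpr (mul_pos hK0 hx0)
      have hjK : ⌈(K : ℝ) * x⌉₊ ≤ K := Nat.ceil_le.mpr
        (by simpa using mul_le_mul_of_nonneg_left hx1 hK0.le)
      have hj1R : (1 : ℝ) ≤ (⌈(K : ℝ) * x⌉₊ : ℝ) := by exact_mod_cast hj1
      have hjKR : ((⌈(K : ℝ) * x⌉₊ : ℕ) : ℝ) ≤ K := by exact_mod_cast hjK
      have hg0 : 0 ≤ g (f x, ⌈(K : ℝ) * x⌉₊) := by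
        simp only [hgdef]
        apply div_nonneg _ hK0.le
        have := hc0 (f x)
        linarith
      have hg1 : g (f x, ⌈(K : ℝ) * x⌉₊) ≤ 1 := by
        simp only [hgdef]
        rw [div_le_one hK0]
        have := hc1 (f x)
        linarith
      rw [Real.norm_eq_abs, abs_abs]
      rw [abs_le]
      constructor <;> nlinarith
  -- the distortion bound
  have hdist : (∫ x in (0 : ℝ)..1, |x - g (f x, ⌈(K : ℝ) * x⌉₊)|) ≤ Δ := by
    have hcell : ∀ k : ℕ, k < K →
        ∫ x in ((k : ℝ) / K)..((((k + 1) : ℕ) : ℝ) / K), |x - g (f x, ⌈(K : ℝ) * x⌉₊)|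
        = 1 / (K : ℝ) ^ 2 * ∫ t in (0:ℝ)..1, φ t := by
      intro k hk
      push_cast
      have h1 : ∫ x in ((k : ℝ) / K)..(((k : ℝ) + 1) / K), |x - g (f x, ⌈(K : ℝ) * x⌉₊)|
          = ∫ x in ((k : ℝ) / K)..(((k : ℝ) + 1) / K), φ ((K : ℝ) * x - k) / K := by
        apply intervalIntegral.integral_congr_ae
        apply ae_of_all
        intro x hx
        rw [Set.uIoc_of_le (hle k)] at hx
        exact hF k x hx
      rw [h1, intervalIntegral.integral_div,
        intervalIntegral.integral_comp_mul_sub φ hK0.ne' (k : ℝ),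
        show (K : ℝ) * ((k : ℝ) / K) - k = 0 by field_simp; ring,
        show (K : ℝ) * (((k : ℝ) + 1) / K) - (k : ℝ) = 1 by field_simp; ring,
        smul_eq_mul]
      ring
    have hsum : ∑ k ∈ Finset.range K,
        ∫ x in ((k : ℝ) / K)..((((k + 1) : ℕ) : ℝ) / K), |x - g (f x, ⌈(K : ℝ) * x⌉₊)|
        = ∫ x in (((0:ℕ) : ℝ) / K)..(((K : ℕ) : ℝ) / K), |x - g (f x, ⌈(K : ℝ) * x⌉₊)| := by
      apply intervalIntegral.sum_integral_adjacent_intervals (a := fun k : ℕ => (k : ℝ) / K)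
      intro k hk
      have := hFint k hk
      push_cast
      exact this
    have hz : (((0:ℕ) : ℝ) / K) = (0:ℝ) := by push_cast; ring
    have ho : (((K : ℕ) : ℝ) / K) = (1:ℝ) := div_self hK0.ne'
    rw [← hz, ← ho, ← hsum,
      Finset.sum_congr rfl (fun k hk => hcell k (Finset.mem_range.mp hk)),
      Finset.sum_const, Finset.card_range, nsmul_eq_mul, hφval]
    have hKΔ : (m : ℝ) * p ^ 2 + q ^ 2 = 4 * ((K : ℝ) * Δ) := hsolve
    rw [hKΔ]
    apply le_of_eq
    field_simp
  -- volumes of encoder cells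
  have hvol : ∀ k : ℕ, k < K → ∀ i : ℕ,
      (K : ℝ) * (volume {x ∈ Set.Ioc ((k : ℝ) / K) (((k : ℝ) + 1) / K) | f x = i}).toReal
      = if i < m then p else if i = m then q else 0 := by
    intro k hk i
    by_cases him : i < m
    · rw [if_pos him]
      have himR : (i : ℝ) + 1 ≤ (m : ℝ) := by exact_mod_cast him
      have hip0 : (0:ℝ) ≤ (i : ℝ) * p := by positivity
      have hab : ((k : ℝ) + (i : ℝ) * p) / K ≤ ((k : ℝ) + ((i : ℝ) + 1) * p) / K :=
        div_le_div_of_nonneg_right (by nlinarith) hK0.le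
      have h1 : Set.Ioo (((k : ℝ) + (i : ℝ) * p) / K) (((k : ℝ) + ((i : ℝ) + 1) * p) / K)
          ⊆ {x ∈ Set.Ioc ((k : ℝ) / K) (((k : ℝ) + 1) / K) | f x = i} := by
        intro x hx
        have hxa : (k : ℝ) + (i : ℝ) * p < (K : ℝ) * x := by
          have := (div_lt_iff₀ hK0).mp hx.1; linarith
        have hxb : (K : ℝ) * x < (k : ℝ) + ((i : ℝ) + 1) * p := by
          have := (lt_div_iff₀ hK0).mp hx.2; linarith
        have hxc : x ∈ Set.Ioc ((k : ℝ) / K) (((k : ℝ) + 1) / K) := by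
          constructor
          · rw [div_lt_iff₀ hK0]; nlinarith
          · rw [le_div_iff₀ hK0]; nlinarith
        refine ⟨hxc, ?_⟩
        rw [hfcell k x hxc]
        have hfl : ⌊((K : ℝ) * x - k) / p⌋₊ = i := by
          rw [Nat.floor_eq_iff (div_nonneg (by nlinarith) hp0.le)]
          constructor
          · rw [le_div_iff₀ hp0]; linarith
          · rw [div_lt_iff₀ hp0]; linarith
        rw [hfl]
        exact min_eq_right him.le
      have h2 : {x ∈ Set.Ioc ((k : ℝ) / K) (((k : ℝ) + 1) / K) | f x = i}
          ⊆ Set.Icc (((k : ℝ) + (i : ℝ) * p) / K) (((k : ℝ) + ((i : ℝ) + 1) * p) / K) := by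
        rintro x ⟨hxc, hfx⟩
        rw [hfcell k x hxc] at hfx
        have hxk : (k : ℝ) < (K : ℝ) * x := by
          have := (div_lt_iff₀ hK0).mp hxc.1; linarith
        have hj : ⌊((K : ℝ) * x - k) / p⌋₊ = i := by
          rcases le_total m ⌊((K : ℝ) * x - k) / p⌋₊ with h | h
          · rw [min_eq_left h] at hfx; omega
          · rwa [min_eq_right h] at hfx
        rw [Nat.floor_eq_iff (div_nonneg (by linarith) hp0.le)] at hj
        obtain ⟨hj1, hj2⟩ := hj
        rw [le_div_iff₀ hp0] at hj1
        rw [div_lt_iff₀ hp0] at hj2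
        constructor
        · rw [div_le_iff₀ hK0]; nlinarith
        · rw [le_div_iff₀ hK0]; push_cast at hj2 ⊢; nlinarith
      rw [vol_toReal_eq hab h1 h2]
      field_simp
      ring
    · by_cases him2 : i = m
      · subst him2
        rw [if_neg (lt_irrefl m), if_pos rfl]
        have hab : ((k : ℝ) + (m : ℝ) * p) / K ≤ ((k : ℝ) + 1) / K :=
          div_le_div_of_nonneg_right (by nlinarith) hK0.le
        have h1 : Set.Ioo (((k : ℝ) + (m : ℝ) * p) / K) (((k : ℝ) + 1) / K)
            ⊆ {x ∈ Set.Ioc ((k : ℝ) / K) (((k : ℝ) + 1) / K) | f x = m} := by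
          intro x hx
          have hip0 : (0:ℝ) ≤ (m : ℝ) * p := by positivity
          have hxa : (k : ℝ) + (m : ℝ) * p < (K : ℝ) * x := by
            have := (div_lt_iff₀ hK0).mp hx.1; linarith
          have hxc : x ∈ Set.Ioc ((k : ℝ) / K) (((k : ℝ) + 1) / K) := by
            constructor
            · rw [div_lt_iff₀ hK0]; nlinarith
            · exact hx.2.le
          refine ⟨hxc, ?_⟩
          rw [hfcell k x hxc]
          have hfl : (m : ℕ) ≤ ⌊((K : ℝ) * x - k) / p⌋₊ :=
            Nat.le_floor (by rw [le_div_iff₀ hp0]; linarith)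
          exact min_eq_left hfl
        have h2 : {x ∈ Set.Ioc ((k : ℝ) / K) (((k : ℝ) + 1) / K) | f x = m}
            ⊆ Set.Icc (((k : ℝ) + (m : ℝ) * p) / K) (((k : ℝ) + 1) / K) := by
          rintro x ⟨hxc, hfx⟩
          rw [hfcell k x hxc] at hfx
          have hxk : (k : ℝ) < (K : ℝ) * x := by
            have := (div_lt_iff₀ hK0).mp hxc.1; linarith
          have hj : (m : ℕ) ≤ ⌊((K : ℝ) * x - k) / p⌋₊ := by
            rcases le_total m ⌊((K : ℝ) * x - k) / p⌋₊ with h | h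
            · exact h
            · rw [min_eq_right h] at hfx; omega
          rw [Nat.le_floor_iff (div_nonneg (by linarith) hp0.le)] at hj
          rw [le_div_iff₀ hp0] at hj
          constructor
          · rw [div_le_iff₀ hK0]; nlinarith
          · exact hxc.2
        rw [vol_toReal_eq hab h1 h2, hq]
        field_simp
        ring
      · rw [if_neg him, if_neg him2]
        have hempty : {x ∈ Set.Ioc ((k : ℝ) / K) (((k : ℝ) + 1) / K) | f x = i} = ∅ := by
          ext x
          simp only [Set.mem_sep_iff, Set.mem_empty_iff_false, iff_false, not_and]
          intro hxc hfx
          rw [hfcell k x hxc] at hfx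
          have := min_le_left m ⌊((K : ℝ) * x - k) / p⌋₊
          omega
        rw [hempty]
        simp
  -- per-cell conditional entropy
  have hts : ∀ k : ℕ, k < K →
      (∑' i : ℕ, Real.negMulLog ((K : ℝ) *
        (volume {x ∈ Set.Ioc ((k : ℝ) / K) (((k : ℝ) + 1) / K) | f x = i}).toReal))
      = (m : ℝ) * Real.negMulLog p + Real.negMulLog q := by
    intro k hk
    rw [tsum_eq_sum (s := Finset.range (m + 1))
      (fun i hi => by
        have him : ¬ i < m + 1 := fun h => hi (Finset.mem_range.mpr h)
        rw [hvol k hk i, if_neg (by omega), if_neg (by omega), Real.negMulLog_zero])]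
    rw [Finset.sum_range_succ,
      Finset.sum_congr rfl (fun i hi => by
        rw [hvol k hk i, if_pos (Finset.mem_range.mp hi)]),
      Finset.sum_const, Finset.card_range, nsmul_eq_mul,
      hvol k hk m, if_neg (lt_irrefl m), if_pos rfl]
  refine ⟨f, g, hmeasf, hdist, ?_⟩
  have hsum : ∑ k ∈ Finset.range K, (1 / (K : ℝ)) *
      (∑' i : ℕ, Real.negMulLog ((K : ℝ) *
        (volume {x ∈ Set.Ioc ((k : ℝ) / K) (((k : ℝ) + 1) / K) | f x = i}).toReal))
      = (m : ℝ) * Real.negMulLog p + Real.negMulLog q := by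
    rw [Finset.sum_congr rfl (fun k hk => by rw [hts k (Finset.mem_range.mp hk)]),
      Finset.sum_const, Finset.card_range, nsmul_eq_mul, ← mul_assoc, mul_one_div,
      div_self hK0.ne', one_mul]
  rw [hsum]
  apply le_of_eq
  simp only [Real.negMulLog, hq]
  ring
end

section
/- For real numbers w > 0, α > 0 and the function φ(w) = min(w,α) - min(w,α)³/(3αw), φ is nondecreasing in w, φ(w) ≤ min(w, α), and as w → ∞, φ(w) → α; moreover φ(w) ≥ (2/3)·min(w, α). -/
open Filter

/-- Properties of `φ(w) = min(w,α) - min(w,α)³/(3αw)` for `α > 0`: it is nondecreasing on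
`(0,∞)`, satisfies `(2/3)·min(w,α) ≤ φ(w) ≤ min(w,α)` for all `w > 0`, and `φ(w) → α` as
`w → ∞`. -/
theorem stmt19 (α : ℝ) (hα : 0 < α) :
    MonotoneOn (fun w : ℝ => min w α - (min w α) ^ 3 / (3 * α * w)) (Set.Ioi 0) ∧
    (∀ w : ℝ, 0 < w →
      min w α - (min w α) ^ 3 / (3 * α * w) ≤ min w α ∧
      2 / 3 * min w α ≤ min w α - (min w α) ^ 3 / (3 * α * w)) ∧
    Tendsto (fun w : ℝ => min w α - (min w α) ^ 3 / (3 * α * w)) atTop (nhds α) := by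
  refine ⟨?_, ?_, ?_⟩
  · intro x hx y hy hxy
    simp only [Set.mem_Ioi] at hx hy
    rcases le_total x α with h1 | h1 <;> rcases le_total y α with h2 | h2
    · simp only [min_eq_left h1, min_eq_left h2]
      rw [show x ^ 3 / (3 * α * x) = x ^ 2 / (3 * α) by field_simp,
        show y ^ 3 / (3 * α * y) = y ^ 2 / (3 * α) by field_simp,
        sub_le_sub_iff, add_div' _ _ _ (by positivity : (0:ℝ) < 3 * α).ne',
        add_div' _ _ _ (by positivity : (0:ℝ) < 3 * α).ne',
        div_le_div_iff₀ (by positivity) (by positivity)]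
      nlinarith [mul_nonneg (sub_nonneg.2 hxy) hα.le]
    · simp only [min_eq_left h1, min_eq_right h2]
      rw [show x ^ 3 / (3 * α * x) = x ^ 2 / (3 * α) by field_simp,
        show α ^ 3 / (3 * α * y) = α ^ 2 / (3 * y) by field_simp,
        sub_le_sub_iff, add_div' _ _ _ (by positivity : (0:ℝ) < 3 * y).ne',
        add_div' _ _ _ (by positivity : (0:ℝ) < 3 * α).ne',
        div_le_div_iff₀ (by positivity) (by positivity)]
      nlinarith [mul_nonneg (sub_nonneg.2 h1) (sub_nonneg.2 h2),
        mul_pos hx hα, mul_pos hx hy, mul_nonneg (sub_nonneg.2 h1) hy.le,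
        mul_nonneg (sub_nonneg.2 h2) hx.le]
    · have hxα : x = α := le_antisymm (hxy.trans h2) h1
      have hyα : y = α := le_antisymm h2 (h1.trans hxy)
      simp [hxα, hyα]
    · simp only [min_eq_right h1, min_eq_right h2]
      rw [show α ^ 3 / (3 * α * x) = α ^ 2 / (3 * x) by field_simp,
        show α ^ 3 / (3 * α * y) = α ^ 2 / (3 * y) by field_simp,
        sub_le_sub_iff, add_div' _ _ _ (by positivity : (0:ℝ) < 3 * y).ne',
        add_div' _ _ _ (by positivity : (0:ℝ) < 3 * x).ne',
        div_le_div_iff₀ (by positivity) (by positivity)]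
      nlinarith [mul_nonneg (sub_nonneg.2 hxy) (sq_nonneg α), mul_pos hx hy]
  · intro w hw
    have hm : 0 < min w α := lt_min hw hα
    constructor
    · exact sub_le_self _ (div_nonneg (by positivity) (by positivity))
    · rw [le_sub_iff_add_le, add_comm, ← le_sub_iff_add_le,
        div_le_iff₀ (by positivity : (0:ℝ) < 3 * α * w)]
      nlinarith [mul_nonneg hm.le (sub_nonneg.2 (min_le_right w α)),
        mul_nonneg hm.le (sub_nonneg.2 (min_le_left w α)),
        mul_nonneg (mul_nonneg hm.le (sub_nonneg.2 (min_le_right w α)))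
          (sub_nonneg.2 (min_le_left w α))]
  · have h0 : Tendsto (fun w : ℝ => α ^ 3 / (3 * α * w)) atTop (nhds 0) := by
      have : (fun w : ℝ => α ^ 3 / (3 * α * w)) = fun w : ℝ => (α ^ 3 / (3 * α)) / w := by
        funext w; rw [div_div]
      rw [this]
      exact tendsto_const_nhds.div_atTop tendsto_id
    have heq : (fun w : ℝ => min w α - (min w α) ^ 3 / (3 * α * w)) =ᶠ[atTop]
        fun w : ℝ => α - α ^ 3 / (3 * α * w) := by
      filter_upwards [eventually_ge_atTop α] with w hw
      rw [min_eq_right hw]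
    refine Tendsto.congr' heq.symm ?_
    simpa using tendsto_const_nhds.sub h0
end
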